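/- Define the Dedekind function $((x)) = \{x\} - 1/2$ if $x \notin \mathbb{Z}$ and $((x)) = 0$ if $x \in \mathbb{Z}$. Then for all real $x, y$: $2\big( ((x)) + ((y)) - ((x+y)) \big) = -\mathrm{sign}(\sin \pi x \cdot \sin \pi y \cdot \sin \pi (x+y))$. -/
import Mathlib


open Real

open Classical in
/-- The Dedekind function `((x))`: `{x} - 1/2` for `x ∉ ℤ` and `0` for `x ∈ ℤ`,
where `{x}` is the fractional part of `x`. -/
noncomputable def dedekind (x : ℝ) : ℝ :=
  if ∃ n : ℤ, x = (n : ℝ) then 0 else Int.fract x - 1 / 2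

lemma sin_pi_mul_rep (t : ℝ) :
    Real.sin (π * t) = (-1) ^ ⌊t⌋ * Real.sin (π * Int.fract t) := by
  have h : π * t = π * Int.fract t + (⌊t⌋ : ℤ) * π := by
    conv_lhs => rw [← Int.fract_add_floor t]
    ring
  rw [h, Real.sin_add_int_mul_pi]

lemma fract_ne_zero_of_not_int {t : ℝ} (h : ¬ ∃ n : ℤ, t = (n : ℝ)) :
    Int.fract t ≠ 0 := by
  intro h0
  exact h ⟨⌊t⌋, by have := Int.floor_add_fract t; linarith⟩

lemma sin_pi_fract_pos {t : ℝ} (h : ¬ ∃ n : ℤ, t = (n : ℝ)) :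
    0 < Real.sin (π * Int.fract t) := by
  have h1 : 0 < Int.fract t :=
    lt_of_le_of_ne (Int.fract_nonneg t) (Ne.symm (fract_ne_zero_of_not_int h))
  have h2 : Int.fract t < 1 := Int.fract_lt_one t
  exact Real.sin_pos_of_pos_of_lt_pi (by positivity)
    (by nlinarith [Real.pi_pos])

lemma sin_pi_int_mul {n : ℤ} {t : ℝ} (h : t = (n : ℝ)) : Real.sin (π * t) = 0 := by
  rw [h, mul_comm]; exact Real.sin_int_mul_pi n

theorem dedekind_sum_identity (x y : ℝ) :
    2 * (dedekind x + dedekind y - dedekind (x + y)) =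
      -Real.sign (Real.sin (π * x) * Real.sin (π * y) * Real.sin (π * (x + y))) := by
  classical
  by_cases hx : ∃ n : ℤ, x = (n : ℝ)
  · obtain ⟨n, hn⟩ := hx
    rw [sin_pi_int_mul hn]
    simp only [zero_mul, mul_zero, Real.sign_zero, neg_zero]
    have hdx : dedekind x = 0 := by rw [dedekind, if_pos ⟨n, hn⟩]
    have hdxy : dedekind (x + y) = dedekind y := by
      unfold dedekind
      by_cases hy : ∃ m : ℤ, y = (m : ℝ)
      · obtain ⟨m, hm⟩ := hy
        rw [if_pos ⟨n + m, by push_cast [hn, hm]; ring⟩, if_pos ⟨m, hm⟩]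
      · rw [if_neg, if_neg hy]
        · rw [hn, Int.fract_intCast_add]
        · rintro ⟨m, hm⟩
          exact hy ⟨m - n, by push_cast; linarith [hn, hm]⟩
    rw [hdx, hdxy]; ring
  by_cases hy : ∃ n : ℤ, y = (n : ℝ)
  · obtain ⟨n, hn⟩ := hy
    rw [sin_pi_int_mul hn]
    simp only [zero_mul, mul_zero, Real.sign_zero, neg_zero]
    have hdy : dedekind y = 0 := by rw [dedekind, if_pos ⟨n, hn⟩]
    have hdxy : dedekind (x + y) = dedekind x := by
      unfold dedekind
      rw [if_neg, if_neg hx]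
      · rw [hn, add_comm, Int.fract_intCast_add]
      · rintro ⟨m, hm⟩
        exact hx ⟨m - n, by push_cast; linarith [hn, hm]⟩
    rw [hdy, hdxy]; ring
  by_cases hxy : ∃ n : ℤ, x + y = (n : ℝ)
  · obtain ⟨n, hn⟩ := hxy
    rw [sin_pi_int_mul hn, mul_zero]
    simp only [Real.sign_zero, neg_zero]
    have hdxy : dedekind (x + y) = 0 := by rw [dedekind, if_pos ⟨n, hn⟩]
    have hfy : Int.fract y = 1 - Int.fract x := by
      have : y = (n : ℝ) + (-x) := by linarith
      rw [this, Int.fract_intCast_add, Int.fract_neg (fract_ne_zero_of_not_int hx)]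
    rw [dedekind, dedekind, if_neg hx, if_neg hy, hdxy, hfy]; ring
  -- main case: none of x, y, x+y is an integer
  have hfx := Int.floor_add_fract x
  have hfy := Int.floor_add_fract y
  have key : Int.fract (x + y) = Int.fract x + Int.fract y - ⌊Int.fract x + Int.fract y⌋ := by
    have h1 : x + y = ((⌊x⌋ + ⌊y⌋ : ℤ) : ℝ) + (Int.fract x + Int.fract y) := by
      push_cast; linarith
    rw [h1, Int.fract_intCast_add, Int.fract]
  have hfloorxy : ⌊x + y⌋ = ⌊x⌋ + ⌊y⌋ + ⌊Int.fract x + Int.fract y⌋ := by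
    have h1 := Int.floor_add_fract (x + y)
    have h2 : ((⌊x + y⌋ : ℝ)) = ((⌊x⌋ + ⌊y⌋ + ⌊Int.fract x + Int.fract y⌋ : ℤ) : ℝ) := by
      push_cast
      rw [key] at h1; push_cast at h1; linarith
    exact_mod_cast h2
  have hsum_ne : Int.fract x + Int.fract y ≠ 1 := by
    intro h1
    exact hxy ⟨⌊x⌋ + ⌊y⌋ + 1, by push_cast; linarith⟩
  have h0x : 0 < Int.fract x :=
    lt_of_le_of_ne (Int.fract_nonneg x) (Ne.symm (fract_ne_zero_of_not_int hx))
  have h0y : 0 < Int.fract y :=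
    lt_of_le_of_ne (Int.fract_nonneg y) (Ne.symm (fract_ne_zero_of_not_int hy))
  have h1x : Int.fract x < 1 := Int.fract_lt_one x
  have h1y : Int.fract y < 1 := Int.fract_lt_one y
  have hprod : Real.sin (π * x) * Real.sin (π * y) * Real.sin (π * (x + y)) =
      ((-1) ^ (⌊x⌋ + ⌊y⌋ + ⌊x + y⌋) : ℝ) *
        (Real.sin (π * Int.fract x) * Real.sin (π * Int.fract y) *
          Real.sin (π * Int.fract (x + y))) := by
    rw [sin_pi_mul_rep x, sin_pi_mul_rep y, sin_pi_mul_rep (x + y), zpow_add₀ (by norm_num : (-1:ℝ) ≠ 0), zpow_add₀ (by norm_num : (-1:ℝ) ≠ 0)]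
    ring
  have hpos : 0 < Real.sin (π * Int.fract x) * Real.sin (π * Int.fract y) *
      Real.sin (π * Int.fract (x + y)) := by
    have := sin_pi_fract_pos hx
    have := sin_pi_fract_pos hy
    have := sin_pi_fract_pos hxy
    positivity
  rw [dedekind, dedekind, dedekind, if_neg hx, if_neg hy, if_neg hxy, key]
  rcases lt_or_gt_of_ne hsum_ne with hlt | hgt
  · have hf0 : ⌊Int.fract x + Int.fract y⌋ = 0 := by
      exact Int.floor_eq_zero_iff.2 (Set.mem_Ico.2 ⟨by positivity, by linarith⟩)
    have heven : Even (⌊x⌋ + ⌊y⌋ + ⌊x + y⌋) := by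
      rw [hfloorxy, hf0]; exact ⟨⌊x⌋ + ⌊y⌋, by ring⟩
    rw [hprod, Even.neg_one_zpow heven, one_mul, Real.sign_of_pos hpos, hf0]
    push_cast; ring
  · have hf1 : ⌊Int.fract x + Int.fract y⌋ = 1 := by
      rw [Int.floor_eq_iff]; constructor <;> push_cast <;> linarith
    have hodd : Odd (⌊x⌋ + ⌊y⌋ + ⌊x + y⌋) := by
      rw [hfloorxy, hf1]; exact ⟨⌊x⌋ + ⌊y⌋, by ring⟩
    rw [hprod, Odd.neg_one_zpow hodd, Real.sign_of_neg (by nlinarith), hf1]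
    push_cast; ring
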